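/- arXiv:2005.07735 — 5 statements merged into one kernel-verified Lean document; each statement's English description precedes it below -/
import Mathlib

section
/- If the left composition operator C_f : g ↦ f ∘ g maps the space BV([a,b]) of functions of bounded variation into itself, then f : ℝ → ℝ is locally Lipschitz: for each r > 0 there exists k(r) > 0 such that |f(u) - f(v)| ≤ k(r)|u - v| for all u, v with |u|, |v| ≤ r. -/
open Set

namespace Stmt5Aux

/-- number of oscillation pairs in block `n` -/
noncomputable def mm (p q : ℕ → ℝ) (n : ℕ) : ℕ := max 1 ⌈((1/2 : ℝ)) ^ n / |p n - q n|⌉₊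

/-- cumulative count of nodes before block `n` -/
noncomputable def CC (p q : ℕ → ℝ) (n : ℕ) : ℕ := 2 * ∑ k ∈ Finset.range n, mm p q k

lemma one_le_mm (p q : ℕ → ℝ) (n : ℕ) : 1 ≤ mm p q n := le_max_left _ _

lemma CC_succ (p q : ℕ → ℝ) (n : ℕ) : CC p q (n+1) = CC p q n + 2 * mm p q n := by
  simp [CC, Finset.sum_range_succ, Nat.mul_add]

lemma even_CC (p q : ℕ → ℝ) (n : ℕ) : Even (CC p q n) := even_two_mul _

lemma two_mul_le_CC (p q : ℕ → ℝ) (n : ℕ) : 2 * n ≤ CC p q n := by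
  induction n with
  | zero => simp
  | succ n ih =>
    rw [CC_succ]
    have := one_le_mm p q n
    omega

lemma CC_mono (p q : ℕ → ℝ) : Monotone (CC p q) := by
  apply monotone_nat_of_le_succ
  intro n
  rw [CC_succ]
  omega

lemma exists_blk (p q : ℕ → ℝ) (j : ℕ) : ∃ n, j < CC p q (n+1) :=
  ⟨j, lt_of_lt_of_le (by omega) (two_mul_le_CC p q (j+1))⟩

/-- the block that node `j` belongs to -/
noncomputable def blk (p q : ℕ → ℝ) (j : ℕ) : ℕ := Nat.find (exists_blk p q j)

lemma lt_CC_blk_succ (p q : ℕ → ℝ) (j : ℕ) : j < CC p q (blk p q j + 1) :=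
  Nat.find_spec (exists_blk p q j)

lemma CC_blk_le (p q : ℕ → ℝ) (j : ℕ) : CC p q (blk p q j) ≤ j := by
  rcases Nat.eq_zero_or_pos (blk p q j) with h | h
  · simp [h, CC]
  · have h1 : ¬ j < CC p q (blk p q j - 1 + 1) :=
      Nat.find_min (exists_blk p q j) (Nat.sub_lt h one_pos)
    have h2 : blk p q j - 1 + 1 = blk p q j := by omega
    rw [h2] at h1
    omega

lemma blk_eq (p q : ℕ → ℝ) {n j : ℕ} (h1 : CC p q n ≤ j) (h2 : j < CC p q (n+1)) :
    blk p q j = n := by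
  have ha : blk p q j ≤ n := Nat.find_le h2
  have hb : n ≤ blk p q j := by
    by_contra hlt
    push_neg at hlt
    have h3 : CC p q (blk p q j + 1) ≤ CC p q n := CC_mono p q (by omega)
    have h4 := lt_CC_blk_succ p q j
    omega
  omega

/-- node values -/
noncomputable def ww (p q : ℕ → ℝ) (j : ℕ) : ℝ :=
  if Even j then p (blk p q j) else q (blk p q j)

/-- increments -/
noncomputable def dd (p q : ℕ → ℝ) (j : ℕ) : ℝ := ww p q (j+1) - ww p q j

lemma blk_add (p q : ℕ → ℝ) {n i : ℕ} (hi : i < 2 * mm p q n) :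
    blk p q (CC p q n + i) = n :=
  blk_eq p q (Nat.le_add_right _ _) (by rw [CC_succ]; omega)

lemma ww_block (p q : ℕ → ℝ) {n i : ℕ} (hi : i < 2 * mm p q n) :
    ww p q (CC p q n + i) = if Even i then p n else q n := by
  have hb := blk_add p q hi
  have hpar : Even (CC p q n + i) ↔ Even i := by
    simp [Nat.even_add, (even_CC p q n)]
  unfold ww
  rw [hb]
  by_cases h : Even i
  · rw [if_pos (hpar.2 h), if_pos h]
  · rw [if_neg (fun hh => h (hpar.1 hh)), if_neg h]

lemma abs_dd_inblock (p q : ℕ → ℝ) {n i : ℕ} (hi : i + 1 < 2 * mm p q n) :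
    |dd p q (CC p q n + i)| = |p n - q n| := by
  have h1 : ww p q (CC p q n + i) = if Even i then p n else q n := ww_block p q (by omega)
  have h2 : ww p q (CC p q n + i + 1) = if Even (i+1) then p n else q n := by
    have h := ww_block p q hi
    rwa [← Nat.add_assoc] at h
  unfold dd
  by_cases h : Even i
  · rw [h1, h2, if_pos h, if_neg (by simp [Nat.even_add_one, h]), abs_sub_comm]
  · rw [h1, h2, if_neg h, if_pos (by simp [Nat.even_add_one, h])]

lemma abs_dd_cross (p q : ℕ → ℝ) (n : ℕ) :
    |dd p q (CC p q n + (2 * mm p q n - 1))| = |p (n+1) - q n| := by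
  have hm := one_le_mm p q n
  have h1 : ww p q (CC p q n + (2 * mm p q n - 1)) = q n := by
    rw [ww_block p q (by omega)]
    rw [if_neg (by rw [Nat.even_iff]; omega)]
  have h2 : (CC p q n + (2 * mm p q n - 1)) + 1 = CC p q (n+1) := by
    rw [CC_succ]; omega
  have h3 : ww p q (CC p q (n+1)) = p (n+1) := by
    have h := ww_block (n := n+1) (i := 0) p q (by have := one_le_mm p q (n+1); omega)
    simpa using h
  unfold dd
  rw [h2, h3, h1]

lemma sum_regroup (p q : ℕ → ℝ) (F : ℕ → ℝ) (N : ℕ) :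
    ∑ j ∈ Finset.range (CC p q N), F j
      = ∑ n ∈ Finset.range N, ∑ i ∈ Finset.range (2 * mm p q n), F (CC p q n + i) := by
  induction N with
  | zero => simp [CC]
  | succ N ih =>
    rw [Finset.sum_range_succ, ← ih, CC_succ, Finset.sum_range_add]


lemma mm_mul_le (p q : ℕ → ℝ) (n : ℕ) (hpos : 0 < |p n - q n|) :
    (mm p q n : ℝ) * |p n - q n| ≤ (1/2:ℝ)^n + |p n - q n| := by
  have hx : (0:ℝ) ≤ (1/2:ℝ)^n / |p n - q n| := by positivity
  have h1 : (mm p q n : ℝ) ≤ (1/2:ℝ)^n / |p n - q n| + 1 := by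
    unfold mm
    rw [Nat.cast_max]
    apply max_le
    · norm_num
      linarith
    · exact (Nat.ceil_lt_add_one hx).le
  calc (mm p q n : ℝ) * |p n - q n|
      ≤ ((1/2:ℝ)^n / |p n - q n| + 1) * |p n - q n| :=
        mul_le_mul_of_nonneg_right h1 (abs_nonneg _)
    _ = (1/2:ℝ)^n + |p n - q n| := by field_simp

lemma le_mm_mul (p q : ℕ → ℝ) (n : ℕ) (hpos : 0 < |p n - q n|) :
    (1/2:ℝ)^n ≤ (mm p q n : ℝ) * |p n - q n| := by
  have h1 : (1/2:ℝ)^n / |p n - q n| ≤ (mm p q n : ℝ) := by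
    refine le_trans (Nat.le_ceil _) ?_
    exact_mod_cast le_max_right 1 _
  have h2 : (1/2:ℝ)^n = ((1/2:ℝ)^n / |p n - q n|) * |p n - q n| :=
    (div_mul_cancel₀ _ (ne_of_gt hpos)).symm
  rw [h2]
  exact mul_le_mul_of_nonneg_right h1 (abs_nonneg _)

lemma block_sum_le (p q : ℕ → ℝ) (c : ℝ)
    (hpc : ∀ n, |p n - c| ≤ (1/2:ℝ)^n)
    (hpos : ∀ n, 0 < |p n - q n|)
    (hsmall : ∀ n, |p n - q n| ≤ (1/2:ℝ)^n) (n : ℕ) :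
    ∑ i ∈ Finset.range (2 * mm p q n), |dd p q (CC p q n + i)| ≤ 7 * (1/2:ℝ)^n := by
  have hm := one_le_mm p q n
  have hk : 2 * mm p q n = (2 * mm p q n - 1) + 1 := by omega
  rw [hk, Finset.sum_range_succ]
  have hin : ∀ i ∈ Finset.range (2 * mm p q n - 1),
      |dd p q (CC p q n + i)| = |p n - q n| := by
    intro i hi
    rw [Finset.mem_range] at hi
    exact abs_dd_inblock p q (by omega)
  rw [Finset.sum_congr rfl hin, Finset.sum_const, Finset.card_range, abs_dd_cross,
    nsmul_eq_mul]
  have hcross : |p (n+1) - q n| ≤ (1/2:ℝ)^(n+1) + (1/2:ℝ)^n + |p n - q n| := by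
    have h1 := hpc (n+1)
    have h2 := hpc n
    have he : p (n+1) - q n = (p (n+1) - c) - (p n - c) + (p n - q n) := by ring
    rw [he]
    calc |(p (n+1) - c) - (p n - c) + (p n - q n)|
        ≤ |(p (n+1) - c) - (p n - c)| + |p n - q n| := abs_add_le _ _
      _ ≤ (|p (n+1) - c| + |p n - c|) + |p n - q n| :=
          add_le_add_left (abs_sub _ _) _
      _ ≤ (1/2:ℝ)^(n+1) + (1/2:ℝ)^n + |p n - q n| := by linarith
  have hmul := mm_mul_le p q n (hpos n)
  have hsm := hsmall n
  have hp2 : (0:ℝ) < (1/2:ℝ)^n := by positivity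
  have hcast : ((2 * mm p q n - 1 : ℕ) : ℝ) ≤ 2 * (mm p q n : ℝ) := by
    have h : (2 * mm p q n - 1 : ℕ) ≤ 2 * mm p q n := by omega
    calc ((2 * mm p q n - 1 : ℕ) : ℝ) ≤ ((2 * mm p q n : ℕ) : ℝ) := by exact_mod_cast h
      _ = 2 * (mm p q n : ℝ) := by push_cast; ring
  have habs : (0:ℝ) ≤ |p n - q n| := abs_nonneg _
  have hps : (1/2:ℝ)^(n+1) ≤ (1/2:ℝ)^n := by
    rw [pow_succ]
    nlinarith
  have hstep : ((2 * mm p q n - 1 : ℕ) : ℝ) * |p n - q n| ≤ 2 * ((1/2:ℝ)^n + |p n - q n|) := by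
    calc ((2 * mm p q n - 1 : ℕ) : ℝ) * |p n - q n| ≤ 2 * (mm p q n : ℝ) * |p n - q n| :=
          mul_le_mul_of_nonneg_right hcast habs
      _ ≤ 2 * ((1/2:ℝ)^n + |p n - q n|) := by nlinarith
  linarith

lemma sum_abs_dd_le (p q : ℕ → ℝ) (c : ℝ)
    (hpc : ∀ n, |p n - c| ≤ (1/2:ℝ)^n)
    (hpos : ∀ n, 0 < |p n - q n|)
    (hsmall : ∀ n, |p n - q n| ≤ (1/2:ℝ)^n) (J : ℕ) :
    ∑ j ∈ Finset.range J, |dd p q j| ≤ 14 := by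
  have hJ : J ≤ CC p q J := le_trans (by omega) (two_mul_le_CC p q J)
  calc ∑ j ∈ Finset.range J, |dd p q j|
      ≤ ∑ j ∈ Finset.range (CC p q J), |dd p q j| :=
        Finset.sum_le_sum_of_subset_of_nonneg (Finset.range_subset_range.2 hJ)
          (fun _ _ _ => abs_nonneg _)
    _ = ∑ n ∈ Finset.range J, ∑ i ∈ Finset.range (2 * mm p q n), |dd p q (CC p q n + i)| :=
        sum_regroup p q _ J
    _ ≤ ∑ n ∈ Finset.range J, 7 * (1/2:ℝ)^n :=
        Finset.sum_le_sum (fun n _ => block_sum_le p q c hpc hpos hsmall n)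
    _ = 7 * ∑ n ∈ Finset.range J, (1/2:ℝ)^n := by rw [Finset.mul_sum]
    _ ≤ 7 * 2 := by
        have := sum_geometric_two_le J
        linarith
    _ = 14 := by norm_num

lemma summable_pos_part (p q : ℕ → ℝ) (c : ℝ)
    (hpc : ∀ n, |p n - c| ≤ (1/2:ℝ)^n)
    (hpos : ∀ n, 0 < |p n - q n|)
    (hsmall : ∀ n, |p n - q n| ≤ (1/2:ℝ)^n) :
    Summable (fun j => max (dd p q j) 0) := by
  apply summable_of_sum_range_le (c := 14) (fun n => le_max_right _ _)
  intro n
  calc ∑ i ∈ Finset.range n, max (dd p q i) 0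
      ≤ ∑ i ∈ Finset.range n, |dd p q i| :=
        Finset.sum_le_sum (fun i _ => max_le (le_abs_self _) (abs_nonneg _))
    _ ≤ 14 := sum_abs_dd_le p q c hpc hpos hsmall n

lemma summable_neg_part (p q : ℕ → ℝ) (c : ℝ)
    (hpc : ∀ n, |p n - c| ≤ (1/2:ℝ)^n)
    (hpos : ∀ n, 0 < |p n - q n|)
    (hsmall : ∀ n, |p n - q n| ≤ (1/2:ℝ)^n) :
    Summable (fun j => max (-dd p q j) 0) := by
  apply summable_of_sum_range_le (c := 14) (fun n => le_max_right _ _)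
  intro n
  calc ∑ i ∈ Finset.range n, max (-dd p q i) 0
      ≤ ∑ i ∈ Finset.range n, |dd p q i| :=
        Finset.sum_le_sum (fun i _ => max_le (neg_le_abs _) (abs_nonneg _))
    _ ≤ 14 := sum_abs_dd_le p q c hpc hpos hsmall n


/-! ### The node positions and the oscillating function -/

noncomputable def xx (a b : ℝ) (j : ℕ) : ℝ := b - (b - a) * (1/2:ℝ)^j

lemma xx_strictMono {a b : ℝ} (hab : a < b) : StrictMono (xx a b) := by
  intro i j hij
  have h0 : (0:ℝ) < b - a := by linarith
  have h := pow_lt_pow_right_of_lt_one₀ (by norm_num : (0:ℝ) < 1/2) (by norm_num) hij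
  unfold xx
  nlinarith

lemma xx_mem {a b : ℝ} (hab : a < b) (j : ℕ) : xx a b j ∈ Icc a b := by
  have h0 : (0:ℝ) < b - a := by linarith
  have h1 : (0:ℝ) < (1/2:ℝ)^j := by positivity
  have h2 : ((1/2:ℝ))^j ≤ 1 := pow_le_one₀ (by norm_num) (by norm_num)
  constructor
  · unfold xx; nlinarith
  · unfold xx; nlinarith

noncomputable def PP (a b : ℝ) (p q : ℕ → ℝ) (x : ℝ) : ℝ :=
  ∑' j, if xx a b (j+1) ≤ x then max (dd p q j) 0 else 0

noncomputable def QQ (a b : ℝ) (p q : ℕ → ℝ) (x : ℝ) : ℝ :=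
  ∑' j, if xx a b (j+1) ≤ x then max (-dd p q j) 0 else 0

noncomputable def gg (a b : ℝ) (p q : ℕ → ℝ) (x : ℝ) : ℝ :=
  ww p q 0 + PP a b p q x - QQ a b p q x

section withHyps

variable {a b : ℝ} (p q : ℕ → ℝ) {c : ℝ}

variable (hab : a < b)
    (hpc : ∀ n, |p n - c| ≤ (1/2:ℝ)^n)
    (hpos : ∀ n, 0 < |p n - q n|)
    (hsmall : ∀ n, |p n - q n| ≤ (1/2:ℝ)^n)

include hpc hpos hsmall

lemma summable_PP_term (x : ℝ) :
    Summable (fun j => if xx a b (j+1) ≤ x then max (dd p q j) 0 else 0) := by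
  apply Summable.of_nonneg_of_le _ _ (summable_pos_part p q c hpc hpos hsmall)
  · intro j
    split
    · exact le_max_right _ _
    · exact le_rfl
  · intro j
    split
    · exact le_rfl
    · exact le_max_right _ _

lemma summable_QQ_term (x : ℝ) :
    Summable (fun j => if xx a b (j+1) ≤ x then max (-dd p q j) 0 else 0) := by
  apply Summable.of_nonneg_of_le _ _ (summable_neg_part p q c hpc hpos hsmall)
  · intro j
    split
    · exact le_max_right _ _
    · exact le_rfl
  · intro j
    split
    · exact le_rfl
    · exact le_max_right _ _

lemma PP_mono : Monotone (PP a b p q) := by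
  intro x y hxy
  apply Summable.tsum_le_tsum _ (summable_PP_term p q hpc hpos hsmall x)
    (summable_PP_term p q hpc hpos hsmall y)
  intro j
  by_cases h : xx a b (j+1) ≤ x
  · rw [if_pos h, if_pos (h.trans hxy)]
  · rw [if_neg h]
    split
    · exact le_max_right _ _
    · exact le_rfl

lemma QQ_mono : Monotone (QQ a b p q) := by
  intro x y hxy
  apply Summable.tsum_le_tsum _ (summable_QQ_term p q hpc hpos hsmall x)
    (summable_QQ_term p q hpc hpos hsmall y)
  intro j
  by_cases h : xx a b (j+1) ≤ x
  · rw [if_pos h, if_pos (h.trans hxy)]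
  · rw [if_neg h]
    split
    · exact le_max_right _ _
    · exact le_rfl

include hab

omit hpc hpos hsmall in
lemma PP_node (J : ℕ) :
    PP a b p q (xx a b J) = ∑ j ∈ Finset.range J, max (dd p q j) 0 := by
  unfold PP
  rw [tsum_eq_sum (s := Finset.range J) ?_]
  · apply Finset.sum_congr rfl
    intro j hj
    rw [Finset.mem_range] at hj
    rw [if_pos ((xx_strictMono hab).monotone (by omega : j+1 ≤ J))]
  · intro j hj
    rw [Finset.mem_range, not_lt] at hj
    rw [if_neg (not_le.2 (xx_strictMono hab (by omega : J < j+1)))]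

omit hpc hpos hsmall in
lemma QQ_node (J : ℕ) :
    QQ a b p q (xx a b J) = ∑ j ∈ Finset.range J, max (-dd p q j) 0 := by
  unfold QQ
  rw [tsum_eq_sum (s := Finset.range J) ?_]
  · apply Finset.sum_congr rfl
    intro j hj
    rw [Finset.mem_range] at hj
    rw [if_pos ((xx_strictMono hab).monotone (by omega : j+1 ≤ J))]
  · intro j hj
    rw [Finset.mem_range, not_lt] at hj
    rw [if_neg (not_le.2 (xx_strictMono hab (by omega : J < j+1)))]

omit hpc hpos hsmall in
lemma gg_node (J : ℕ) : gg a b p q (xx a b J) = ww p q J := by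
  unfold gg
  rw [PP_node p q hab J, QQ_node p q hab J]
  have hsum : ∑ j ∈ Finset.range J, max (dd p q j) 0
      - ∑ j ∈ Finset.range J, max (-dd p q j) 0 = ww p q J - ww p q 0 := by
    rw [← Finset.sum_sub_distrib,
      Finset.sum_congr rfl (fun j _ => max_zero_sub_max_neg_zero_eq_self (dd p q j))]
    exact Finset.sum_range_sub (fun j => ww p q j) J
  linarith

end withHyps

/-! ### Variation estimates -/

lemma evar_sub_le (F G : ℝ → ℝ) (s : Set ℝ) :
    eVariationOn (fun x => F x - G x) s ≤ eVariationOn F s + eVariationOn G s := by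
  apply iSup_le
  rintro ⟨n, u, hu, us⟩
  calc ∑ i ∈ Finset.range n,
        edist (F (u (i+1)) - G (u (i+1))) (F (u i) - G (u i))
      ≤ ∑ i ∈ Finset.range n,
          (edist (F (u (i+1))) (F (u i)) + edist (G (u (i+1))) (G (u i))) := by
        apply Finset.sum_le_sum
        intro i _
        rw [edist_dist, edist_dist, edist_dist]
        exact le_trans (ENNReal.ofReal_le_ofReal (dist_sub_sub_le _ _ _ _))
          ENNReal.ofReal_add_le
    _ = _ := Finset.sum_add_distrib
    _ ≤ _ := add_le_add (eVariationOn.sum_le (f := F) (n := n) hu us) (eVariationOn.sum_le (f := G) (n := n) hu us)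

lemma evar_monotone_le {F : ℝ → ℝ} (hF : Monotone F) {a b : ℝ} (hab : a ≤ b) :
    eVariationOn F (Icc a b) ≤ ENNReal.ofReal (F b - F a) := by
  have h := (hF.monotoneOn (Icc a b)).eVariationOn_le (left_mem_Icc.2 hab)
    (right_mem_Icc.2 hab)
  rwa [inter_self] at h


section mainEstimates

variable {a b : ℝ} (p q : ℕ → ℝ) {c : ℝ}

variable (hab : a < b)
    (hpc : ∀ n, |p n - c| ≤ (1/2:ℝ)^n)
    (hpos : ∀ n, 0 < |p n - q n|)
    (hsmall : ∀ n, |p n - q n| ≤ (1/2:ℝ)^n)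

include hab hpc hpos hsmall

lemma gg_bv : BoundedVariationOn (gg a b p q) (Icc a b) := by
  have hP : Monotone (fun x => ww p q 0 + PP a b p q x) := fun x y h =>
    add_le_add_right (PP_mono p q hpc hpos hsmall h) _
  have hQ : Monotone (QQ a b p q) := QQ_mono p q hpc hpos hsmall
  have hle : eVariationOn (fun x => (ww p q 0 + PP a b p q x) - QQ a b p q x) (Icc a b)
      ≤ eVariationOn (fun x => ww p q 0 + PP a b p q x) (Icc a b)
        + eVariationOn (QQ a b p q) (Icc a b) :=
    evar_sub_le (fun x => ww p q 0 + PP a b p q x) (QQ a b p q) (Icc a b)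
  have hggeq : (fun x => (ww p q 0 + PP a b p q x) - QQ a b p q x) = gg a b p q := rfl
  rw [hggeq] at hle
  have h1 := evar_monotone_le hP hab.le
  have h2 := evar_monotone_le hQ hab.le
  have hfin : ENNReal.ofReal ((fun x => ww p q 0 + PP a b p q x) b
        - (fun x => ww p q 0 + PP a b p q x) a)
      + ENNReal.ofReal (QQ a b p q b - QQ a b p q a) ≠ ⊤ :=
    ENNReal.add_ne_top.2 ⟨ENNReal.ofReal_ne_top, ENNReal.ofReal_ne_top⟩
  exact ne_top_of_le_ne_top hfin (hle.trans (add_le_add h1 h2))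

lemma fgg_not_bv (f : ℝ → ℝ) (M : ℝ) (hM : 0 < M)
    (hbig : ∀ n, 2^n * M * |p n - q n| ≤ |f (p n) - f (q n)|) :
    ¬ BoundedVariationOn (f ∘ gg a b p q) (Icc a b) := by
  intro hB
  set W : ℝ := (eVariationOn (f ∘ gg a b p q) (Icc a b)).toReal with hW
  have key : ∀ N : ℕ, (N : ℝ) * M ≤ W := by
    intro N
    have humono : Monotone (fun i => xx a b (min i (CC p q N))) :=
      fun i j hij => (xx_strictMono hab).monotone (min_le_min_right _ hij)
    have humem : ∀ i, (fun i => xx a b (min i (CC p q N))) i ∈ Icc a b :=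
      fun i => xx_mem hab _
    have hsum := eVariationOn.sum_le (f := f ∘ gg a b p q) (n := CC p q N) humono humem
    have hchain : ENNReal.ofReal
        (∑ i ∈ Finset.range (CC p q N), |f (ww p q (i+1)) - f (ww p q i)|)
        ≤ eVariationOn (f ∘ gg a b p q) (Icc a b) := by
      rw [ENNReal.ofReal_sum_of_nonneg (fun i _ => abs_nonneg _)]
      refine le_trans (le_of_eq (Finset.sum_congr rfl ?_)) hsum
      intro i hi
      rw [Finset.mem_range] at hi
      rw [min_eq_left (by omega : i ≤ CC p q N),
        min_eq_left (by omega : i + 1 ≤ CC p q N)]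
      simp only [Function.comp_apply]
      rw [gg_node p q hab (i+1), gg_node p q hab i, edist_dist, Real.dist_eq]
    have hS : (N:ℝ) * M ≤ ∑ i ∈ Finset.range (CC p q N),
        |f (ww p q (i+1)) - f (ww p q i)| := by
      rw [sum_regroup p q (fun j => |f (ww p q (j+1)) - f (ww p q j)|) N]
      have block_lower : ∀ n ∈ Finset.range N, M ≤ ∑ i ∈ Finset.range (2 * mm p q n),
          |f (ww p q (CC p q n + i + 1)) - f (ww p q (CC p q n + i))| := by
        intro n _
        have hm := one_le_mm p q n
        have hfd : ∀ i ∈ Finset.range (2 * mm p q n - 1),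
            |f (ww p q (CC p q n + i + 1)) - f (ww p q (CC p q n + i))|
              = |f (p n) - f (q n)| := by
          intro i hi
          rw [Finset.mem_range] at hi
          have h1 : ww p q (CC p q n + i) = if Even i then p n else q n :=
            ww_block p q (by omega)
          have h2 : ww p q (CC p q n + i + 1) = if Even (i+1) then p n else q n := by
            have h := ww_block p q (show i + 1 < 2 * mm p q n by omega)
            rwa [← Nat.add_assoc] at h
          by_cases h : Even i
          · rw [h1, h2, if_pos h, if_neg (by simp [Nat.even_add_one, h]), abs_sub_comm]
          · rw [h1, h2, if_neg h, if_pos (by simp [Nat.even_add_one, h])]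
        have hmmcast : (mm p q n : ℝ) ≤ ((2 * mm p q n - 1 : ℕ):ℝ) := by
          exact_mod_cast (by omega : mm p q n ≤ 2 * mm p q n - 1)
        have h1 := le_mm_mul p q n (hpos n)
        have h2 := hbig n
        have hfdpos : (0:ℝ) ≤ |f (p n) - f (q n)| := abs_nonneg _
        have hpow : (2:ℝ)^n * (1/2:ℝ)^n = 1 := by
          rw [← mul_pow]; norm_num
        have e1 : M = 2^n * M * (1/2:ℝ)^n := by
          rw [mul_comm ((2:ℝ)^n) M, mul_assoc, hpow, mul_one]
        calc M ≤ ((2 * mm p q n - 1 : ℕ):ℝ) * |f (p n) - f (q n)| := by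
              rw [e1]
              calc (2:ℝ)^n * M * (1/2:ℝ)^n
                  ≤ 2^n * M * ((mm p q n : ℝ) * |p n - q n|) :=
                    mul_le_mul_of_nonneg_left h1 (by positivity)
                _ = (mm p q n : ℝ) * (2^n * M * |p n - q n|) := by ring
                _ ≤ (mm p q n : ℝ) * |f (p n) - f (q n)| :=
                    mul_le_mul_of_nonneg_left h2 (by positivity)
                _ ≤ ((2 * mm p q n - 1 : ℕ):ℝ) * |f (p n) - f (q n)| :=
                    mul_le_mul_of_nonneg_right hmmcast hfdpos
          _ = ∑ i ∈ Finset.range (2 * mm p q n - 1),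
                |f (ww p q (CC p q n + i + 1)) - f (ww p q (CC p q n + i))| := by
              rw [Finset.sum_congr rfl hfd, Finset.sum_const, Finset.card_range,
                nsmul_eq_mul]
          _ ≤ ∑ i ∈ Finset.range (2 * mm p q n),
                |f (ww p q (CC p q n + i + 1)) - f (ww p q (CC p q n + i))| :=
              Finset.sum_le_sum_of_subset_of_nonneg
                (Finset.range_subset_range.2 (by omega)) (fun _ _ _ => abs_nonneg _)
      calc (N:ℝ) * M = ∑ _n ∈ Finset.range N, M := by
            rw [Finset.sum_const, Finset.card_range, nsmul_eq_mul]
        _ ≤ _ := Finset.sum_le_sum block_lower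
    have hle2 : ENNReal.ofReal ((N:ℝ) * M) ≤ eVariationOn (f ∘ gg a b p q) (Icc a b) :=
      le_trans (ENNReal.ofReal_le_ofReal hS) hchain
    exact (ENNReal.ofReal_le_iff_le_toReal hB).1 hle2
  obtain ⟨N, hN⟩ := exists_nat_gt (W / M)
  have h1 := key N
  have h2 : W / M < N := hN
  have : (N:ℝ) ≤ W / M := (le_div_iff₀ hM).2 h1
  linarith

lemma key_construction (f : ℝ → ℝ) (M : ℝ) (hM : 0 < M)
    (hbig : ∀ n, 2^n * M * |p n - q n| ≤ |f (p n) - f (q n)|) :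
    ∃ g : ℝ → ℝ, BoundedVariationOn g (Icc a b) ∧
      ¬ BoundedVariationOn (f ∘ g) (Icc a b) :=
  ⟨gg a b p q, gg_bv p q hab hpc hpos hsmall,
    fgg_not_bv p q hab hpc hpos hsmall f M hM hbig⟩

end mainEstimates

end Stmt5Aux

open Stmt5Aux in
/-- If the left composition operator `C_f : g ↦ f ∘ g` maps `BV([a,b])` into itself
(`a < b`), then `f` is locally Lipschitz on bounded sets. -/
theorem stmt5 (a b : ℝ) (hab : a < b) (f : ℝ → ℝ)
    (hCf : ∀ g : ℝ → ℝ, BoundedVariationOn g (Icc a b) →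
      BoundedVariationOn (f ∘ g) (Icc a b)) :
    ∀ r > (0 : ℝ), ∃ k > (0 : ℝ), ∀ u v : ℝ, |u| ≤ r → |v| ≤ r →
      |f u - f v| ≤ k * |u - v| := by
  by_contra hcon
  push_neg at hcon
  obtain ⟨r, hr, H⟩ := hcon
  have hba : (0:ℝ) < b - a := by linarith
  -- Step 1: a bound for `f` on `[-r, r]`, coming from the affine parameterization.
  set g0 : ℝ → ℝ := fun x => -r + (x - a) * (2 * r / (b - a)) with hg0
  have hslope : (0:ℝ) ≤ 2 * r / (b - a) := by positivity
  have hg0mono : Monotone g0 := by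
    intro x y hxy
    simp only [hg0]
    have := mul_le_mul_of_nonneg_right (sub_le_sub_right hxy a) hslope
    linarith
  have hg0bv : BoundedVariationOn g0 (Icc a b) :=
    ne_top_of_le_ne_top ENNReal.ofReal_ne_top (evar_monotone_le hg0mono hab.le)
  have hfg0 := hCf g0 hg0bv
  set M0 : ℝ := (eVariationOn (f ∘ g0) (Icc a b)).toReal with hM0
  have hMb : ∀ u v : ℝ, |u| ≤ r → |v| ≤ r → |f u - f v| ≤ M0 := by
    intro u v hu hv
    have key : ∀ w : ℝ, |w| ≤ r → ∃ t ∈ Icc a b, g0 t = w := by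
      intro w hw
      rw [abs_le] at hw
      refine ⟨a + (w + r) * ((b - a) / (2 * r)), ?_, ?_⟩
      · constructor
        · have : (0:ℝ) ≤ (w + r) * ((b - a) / (2 * r)) := by
            apply mul_nonneg (by linarith) (by positivity)
          linarith
        · have h1 : (w + r) * ((b - a) / (2 * r)) ≤ 2 * r * ((b - a) / (2 * r)) :=
            mul_le_mul_of_nonneg_right (by linarith) (by positivity)
          have h2 : 2 * r * ((b - a) / (2 * r)) = b - a := by
            field_simp
          linarith
      · simp only [hg0]
        field_simp
        ring
    obtain ⟨tu, htu, hgtu⟩ := key u hu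
    obtain ⟨tv, htv, hgtv⟩ := key v hv
    have hd := hfg0.dist_le htu htv
    rw [← hM0] at hd
    simp only [Function.comp_apply, hgtu, hgtv, Real.dist_eq] at hd
    exact hd
  set M : ℝ := M0 + 1 with hM
  have hM0nn : 0 ≤ M0 := ENNReal.toReal_nonneg
  have hMpos : 0 < M := by linarith
  -- Step 2: choose bad pairs for each scale.
  have hpair : ∀ j : ℕ, ∃ uv : ℝ × ℝ, |uv.1| ≤ r ∧ |uv.2| ≤ r ∧
      2^j * M * |uv.1 - uv.2| < |f uv.1 - f uv.2| := by
    intro j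
    obtain ⟨u, v, h1, h2, h3⟩ := H ((2:ℝ)^j * M) (by positivity)
    exact ⟨(u, v), h1, h2, h3⟩
  choose UV hUV1 hUV2 hUV3 using hpair
  -- Step 3: extract a convergent subsequence of first coordinates.
  have hUmem : ∀ j, (UV j).1 ∈ Icc (-r) r := fun j => abs_le.1 (hUV1 j)
  obtain ⟨c, -, φ, hφ, hconv⟩ :=
    (isCompact_Icc (a := -r) (b := r)).tendsto_subseq hUmem
  have hA : ∀ n : ℕ, ∃ m, n ≤ m ∧ |(UV (φ m)).1 - c| ≤ (1/2:ℝ)^n := by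
    intro n
    obtain ⟨Nn, hNn⟩ := (Metric.tendsto_atTop.1 hconv) ((1/2:ℝ)^n) (by positivity)
    refine ⟨max n Nn, le_max_left _ _, ?_⟩
    have h := hNn (max n Nn) (le_max_right _ _)
    rw [Function.comp_apply, Real.dist_eq] at h
    exact h.le
  choose A hA1 hA2 using hA
  set p : ℕ → ℝ := fun n => (UV (φ (A n))).1 with hp
  set q : ℕ → ℝ := fun n => (UV (φ (A n))).2 with hq
  have hidx : ∀ n, n ≤ φ (A n) := fun n => le_trans (hA1 n) (hφ.le_apply)
  have hpc : ∀ n, |p n - c| ≤ (1/2:ℝ)^n := fun n => hA2 n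
  have h3' : ∀ n, 2^(φ (A n)) * M * |p n - q n| < |f (p n) - f (q n)| :=
    fun n => hUV3 (φ (A n))
  have hfd_le : ∀ n, |f (p n) - f (q n)| ≤ M0 := fun n =>
    hMb _ _ (hUV1 (φ (A n))) (hUV2 (φ (A n)))
  have hpos : ∀ n, 0 < |p n - q n| := by
    intro n
    by_contra hc2
    push_neg at hc2
    have h0 : |p n - q n| = 0 := le_antisymm hc2 (abs_nonneg _)
    have hpq : p n = q n := by rwa [abs_eq_zero, sub_eq_zero] at h0
    have h := h3' n
    rw [h0, mul_zero, hpq, sub_self, abs_zero] at h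
    exact lt_irrefl _ h
  have hjpow : ∀ n, (2:ℝ)^n ≤ 2^(φ (A n)) := fun n =>
    pow_le_pow_right₀ one_le_two (hidx n)
  have hsmall : ∀ n, |p n - q n| ≤ (1/2:ℝ)^n := by
    intro n
    have h := h3' n
    have hlt : 2^(φ (A n)) * M * |p n - q n| < M := by
      have := hfd_le n
      calc 2^(φ (A n)) * M * |p n - q n| < |f (p n) - f (q n)| := h
        _ ≤ M0 := this
        _ < M := by rw [hM]; linarith
    have habs := abs_nonneg (p n - q n)
    have h2n : (0:ℝ) < 2^n := by positivity
    have hstep : 2^n * M * |p n - q n| < M := by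
      have := mul_le_mul_of_nonneg_right
        (mul_le_mul_of_nonneg_right (hjpow n) hMpos.le) habs
      calc 2^n * M * |p n - q n| ≤ 2^(φ (A n)) * M * |p n - q n| := this
        _ < M := hlt
    have h2e : 2^n * |p n - q n| < 1 := by
      have hM' : 0 < M := hMpos
      nlinarith
    have hpow : (1/2:ℝ)^n * 2^n = 1 := by
      rw [← mul_pow]; norm_num
    nlinarith
  have hbig : ∀ n, 2^n * M * |p n - q n| ≤ |f (p n) - f (q n)| := by
    intro n
    have h := (h3' n).le
    have habs := abs_nonneg (p n - q n)
    calc 2^n * M * |p n - q n| ≤ 2^(φ (A n)) * M * |p n - q n| :=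
          mul_le_mul_of_nonneg_right
            (mul_le_mul_of_nonneg_right (hjpow n) hMpos.le) habs
      _ ≤ |f (p n) - f (q n)| := h
  obtain ⟨g, hgbv, hnbv⟩ :=
    key_construction p q hab hpc hpos hsmall f M hMpos hbig
  exact hnbv (hCf g hgbv)
end

section
/- The function f : [0,1] → ℝ with f(0) = 0 and f(x) = x² sin²(1/x) for x ∈ (0,1] has bounded variation on [0,1], but it is not pseudo-monotone: the preimage f⁻¹({0}) = {0} ∪ {1/(nπ) : n ∈ ℕ} cannot be expressed as a finite union of intervals. -/
open Set

/-- The function `f(0) = 0`, `f(x) = x² sin²(1/x)` has bounded variation on `[0,1]`,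
its zero set in `[0,1]` is `{0} ∪ {1/(nπ) : n ∈ ℕ, n ≥ 1}`, and this set cannot be
expressed as a finite union of intervals, so `f` is not pseudo-monotone. -/
theorem stmt9 (f : ℝ → ℝ)
    (hf : ∀ x : ℝ, f x = if x = 0 then 0 else x ^ 2 * Real.sin (1 / x) ^ 2) :
    BoundedVariationOn f (Icc 0 1) ∧
    (Icc (0 : ℝ) 1 ∩ f ⁻¹' {0} = {0} ∪ {x : ℝ | ∃ n : ℕ, 0 < n ∧ x = 1 / (n * Real.pi)}) ∧
    ¬ ∃ (N : ℕ) (I : Fin N → Set ℝ), (∀ i, (I i).OrdConnected) ∧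
        Icc (0 : ℝ) 1 ∩ f ⁻¹' {0} = ⋃ i, I i := by
  have hπ : (0:ℝ) < Real.pi := Real.pi_pos
  have hπ1 : (1:ℝ) < Real.pi := by linarith [Real.pi_gt_three]
  -- Part 1: bounded variation
  have hBV : BoundedVariationOn f (Icc 0 1) := by
    set g : ℝ → ℝ := fun x => if x = 0 then 0 else
      2 * x * Real.sin (1/x) ^ 2 - 2 * Real.sin (1/x) * Real.cos (1/x) with hg
    have hderiv : ∀ x ∈ Icc (0:ℝ) 1, HasDerivWithinAt f (g x) (Icc 0 1) x := by
      intro x hx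
      rcases eq_or_ne x 0 with rfl | hx0
      · -- derivative 0 at 0
        simp only [hg, if_pos rfl]
        have h0 : HasDerivAt f 0 0 := by
          rw [hasDerivAt_iff_isLittleO]
          have h1 : (fun x : ℝ => f x) =O[nhds 0] fun x => x ^ 2 := by
            apply Asymptotics.isBigO_of_le
            intro y
            rcases eq_or_ne y 0 with rfl | hy
            · simp [hf]
            · rw [hf y, if_neg hy]
              have hs : Real.sin (1/y) ^ 2 ≤ 1 := by
                have := Real.neg_one_le_sin (1/y)
                have := Real.sin_le_one (1/y)
                nlinarith
              have hs0 : 0 ≤ Real.sin (1/y) ^ 2 := sq_nonneg _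
              rw [Real.norm_eq_abs, Real.norm_eq_abs, abs_of_nonneg (by positivity),
                abs_of_nonneg (by positivity)]
              nlinarith [sq_nonneg y]
          have h2 : (fun x : ℝ => x ^ 2) =o[nhds 0] fun x => x := by
            have : (fun x : ℝ => x) =o[nhds (0:ℝ)] fun _ => (1:ℝ) :=
              (Asymptotics.isLittleO_one_iff ℝ).2 (by exact Filter.tendsto_id)
            simpa [pow_two] using this.mul_isBigO (Asymptotics.isBigO_refl (fun x : ℝ => x) _)
          simpa [hf 0] using h1.trans_isLittleO h2
        exact h0.hasDerivWithinAt
      · have hF : HasDerivAt (fun y : ℝ => y ^ 2 * Real.sin (1/y) ^ 2)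
            (2 * x * Real.sin (1/x) ^ 2 - 2 * Real.sin (1/x) * Real.cos (1/x)) x := by
          have hinv : HasDerivAt (fun y : ℝ => 1/y) (-(1/x^2)) x := by
            simpa [one_div] using hasDerivAt_inv hx0
          have hsin : HasDerivAt (fun y : ℝ => Real.sin (1/y))
              (Real.cos (1/x) * (-(1/x^2))) x := (Real.hasDerivAt_sin _).comp x hinv
          have hsin2 : HasDerivAt (fun y : ℝ => Real.sin (1/y) ^ 2)
              (2 * Real.sin (1/x) ^ 1 * (Real.cos (1/x) * (-(1/x^2)))) x := hsin.pow 2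
          have : HasDerivAt (fun y : ℝ => y ^ 2 * Real.sin (1/y) ^ 2) _ x := (hasDerivAt_pow 2 x).mul hsin2
          convert this using 1
          field_simp
          ring
        have heq : f =ᶠ[nhds x] fun y : ℝ => y ^ 2 * Real.sin (1/y) ^ 2 := by
          filter_upwards [isOpen_ne.mem_nhds hx0] with y hy
          rw [hf y, if_neg hy]
        have : HasDerivAt f (2 * x * Real.sin (1/x) ^ 2
            - 2 * Real.sin (1/x) * Real.cos (1/x)) x := hF.congr_of_eventuallyEq heq
        simpa [hg, if_neg hx0] using this.hasDerivWithinAt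
    have hbound : ∀ x ∈ Icc (0:ℝ) 1, ‖g x‖₊ ≤ (4 : NNReal) := by
      intro x hx
      rw [← NNReal.coe_le_coe, coe_nnnorm, Real.norm_eq_abs]
      have : |g x| ≤ 4 := by
        rcases eq_or_ne x 0 with rfl | hx0
        · simp [hg]
        · rw [hg]
          simp only [if_neg hx0]
          have hs := Real.neg_one_le_sin (1/x)
          have hs' := Real.sin_le_one (1/x)
          have hc := Real.neg_one_le_cos (1/x)
          have hc' := Real.cos_le_one (1/x)
          have hx1 := hx.1
          have hx2 := hx.2
          rw [abs_le]
          constructor <;> nlinarith [sq_nonneg (Real.sin (1/x)), sq_nonneg x]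
      simpa using this
    have hlip : LipschitzOnWith 4 f (Icc 0 1) :=
      (convex_Icc (0:ℝ) 1).lipschitzOnWith_of_nnnorm_hasDerivWithin_le hderiv hbound
    have := hlip.locallyBoundedVariationOn 0 1 (by simp) (by simp)
    simpa using this
  -- Part 2: set equality
  have hset : Icc (0:ℝ) 1 ∩ f ⁻¹' {0}
      = {0} ∪ {x : ℝ | ∃ n : ℕ, 0 < n ∧ x = 1 / (n * Real.pi)} := by
    ext x
    simp only [mem_inter_iff, mem_Icc, mem_preimage, mem_singleton_iff, mem_union, mem_setOf_eq]
    constructor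
    · rintro ⟨⟨hx0, hx1⟩, hfx⟩
      rcases eq_or_lt_of_le hx0 with h0 | h0
      · exact Or.inl h0.symm
      · right
        rw [hf x, if_neg (ne_of_gt h0)] at hfx
        have hs : Real.sin (1/x) = 0 := by
          rcases mul_eq_zero.1 hfx with h | h
          · exact absurd h (by positivity)
          · exact pow_eq_zero_iff (two_ne_zero) |>.1 h
        obtain ⟨k, hk⟩ := Real.sin_eq_zero_iff.1 hs
        have hk0 : 0 < k := by
          by_contra hle
          push_neg at hle
          have : (k:ℝ) ≤ 0 := by exact_mod_cast hle
          have h1x : 0 < 1/x := by positivity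
          nlinarith
        refine ⟨k.toNat, by omega, ?_⟩
        have hcast : (k.toNat : ℝ) = (k : ℝ) := by
          exact_mod_cast Int.toNat_of_nonneg hk0.le
        rw [hcast]
        have hmul : (k:ℝ) * Real.pi * x = 1 := by
          rw [hk]; field_simp
        exact eq_one_div_of_mul_eq_one_left (by linarith [hmul, mul_comm x ((k:ℝ) * Real.pi)])
    · rintro (rfl | ⟨n, hn, rfl⟩)
      · refine ⟨⟨le_refl _, zero_le_one⟩, ?_⟩
        simp [hf 0]
      · have hnπ : (1:ℝ) ≤ (n:ℝ) * Real.pi := by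
          have : (1:ℝ) ≤ (n:ℝ) := by exact_mod_cast hn
          nlinarith
        have hpos : (0:ℝ) < (n:ℝ) * Real.pi := by positivity
        have hxne : (1 : ℝ) / ((n:ℝ) * Real.pi) ≠ 0 := by positivity
        refine ⟨⟨by positivity, by rw [div_le_one hpos]; exact hnπ⟩, ?_⟩
        rw [hf, if_neg hxne, one_div_one_div, Real.sin_nat_mul_pi]
        simp
  refine ⟨hBV, hset, ?_⟩
  -- Part 3: not a finite union of intervals
  rintro ⟨N, I, hI, hIeq⟩
  rw [hset] at hIeq
  set S : Set ℝ := {0} ∪ {x : ℝ | ∃ n : ℕ, 0 < n ∧ x = 1 / (n * Real.pi)} with hS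
  have hScount : S.Countable := by
    apply Countable.union (countable_singleton 0)
    have : {x : ℝ | ∃ n : ℕ, 0 < n ∧ x = 1 / (n * Real.pi)} ⊆
        range (fun n : ℕ => 1 / ((n:ℝ) * Real.pi)) := by
      rintro x ⟨n, _, rfl⟩
      exact ⟨n, rfl⟩
    exact (countable_range _).mono this
  -- the sequence of points
  set u : ℕ → ℝ := fun n => 1 / (((n:ℝ) + 1) * Real.pi) with hu
  have huS : ∀ n, u n ∈ S := by
    intro n
    right
    exact ⟨n + 1, Nat.succ_pos n, by simp only [hu]; push_cast; ring_nf⟩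
  have huinj : Function.Injective u := by
    intro a b hab
    have ha : (0:ℝ) < ((a:ℝ)+1) * Real.pi := by positivity
    have hb : (0:ℝ) < ((b:ℝ)+1) * Real.pi := by positivity
    have h2 : ((a:ℝ)+1) * Real.pi = ((b:ℝ)+1) * Real.pi := by
      have h := congrArg (fun t : ℝ => 1 / t) hab
      simp only [hu, one_div_one_div] at h
      exact h
    have h3 : ((a:ℝ)+1) = ((b:ℝ)+1) := mul_right_cancel₀ (ne_of_gt hπ) h2
    have : (a:ℝ) = b := by linarith
    exact_mod_cast this
  -- choose index for each n
  have hchoice : ∀ n : ℕ, ∃ i : Fin N, u n ∈ I i := by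
    intro n
    have h := huS n
    rw [hIeq] at h
    exact mem_iUnion.1 h
  choose φ hφ using hchoice
  obtain ⟨m, k, hmk, hφeq⟩ := Finite.exists_ne_map_eq_of_infinite φ
  have hm : u m ∈ I (φ m) := hφ m
  have hk2 : u k ∈ I (φ m) := by rw [hφeq]; exact hφ k
  have hmin : min (u m) (u k) ∈ I (φ m) := by
    rcases min_choice (u m) (u k) with h | h <;> rw [h] <;> assumption
  have hmax : max (u m) (u k) ∈ I (φ m) := by
    rcases max_choice (u m) (u k) with h | h <;> rw [h] <;> assumption
  have hab : min (u m) (u k) < max (u m) (u k) := min_lt_max.2 (huinj.ne hmk)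
  have hsub : Icc (min (u m) (u k)) (max (u m) (u k)) ⊆ S := by
    refine subset_trans ((hI (φ m)).out hmin hmax) ?_
    rw [hIeq]
    exact subset_iUnion I (φ m)
  have hcnt : (Icc (min (u m) (u k)) (max (u m) (u k))).Countable := hScount.mono hsub
  have hle : Cardinal.mk (Icc (min (u m) (u k)) (max (u m) (u k))) ≤ Cardinal.aleph0 := by
    have := hcnt.to_subtype
    exact Cardinal.mk_le_aleph0
  rw [Cardinal.mk_Icc_real hab] at hle
  exact absurd hle Cardinal.aleph0_lt_continuum.not_ge
end

section
/- Let f : ℝ → ℝ. If f is a right Baire one compositor (g ∘ f is Baire one for every Baire one g), then for every closed set A ⊆ ℝ, the preimage f⁻¹(A) is an Fσ set. -/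
open Set

/-- `s` is an `Fσ` set: a countable union of closed sets. -/
def IsFSigma (s : Set ℝ) : Prop :=
  ∃ F : ℕ → Set ℝ, (∀ n, IsClosed (F n)) ∧ s = ⋃ n, F n

/-- `g` is of Baire class one: preimages of open sets are `Fσ`. -/
def BaireOneFn (g : ℝ → ℝ) : Prop :=
  ∀ A : Set ℝ, IsOpen A → IsFSigma (g ⁻¹' A)

lemma isFSigma_of_isOpen (U : Set ℝ) (hU : IsOpen U) : IsFSigma U := by
  rcases eq_or_ne Uᶜ ∅ with h | h
  · refine ⟨fun _ => U, fun _ => ?_, (iUnion_const U).symm⟩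
    have : U = univ := by
      rw [← compl_empty_iff, h]
    rw [this]; exact isClosed_univ
  · have hne : Uᶜ.Nonempty := nonempty_iff_ne_empty.2 h
    refine ⟨fun n => {x | (1 : ℝ) / (n + 1) ≤ Metric.infDist x Uᶜ}, fun n => ?_, ?_⟩
    · exact isClosed_le continuous_const (Metric.continuous_infDist_pt _)
    · ext x
      simp only [mem_iUnion, mem_setOf_eq]
      constructor
      · intro hx
        have hpos : 0 < Metric.infDist x Uᶜ :=
          (hU.isClosed_compl.notMem_iff_infDist_pos hne).1 (by simpa using hx)
        obtain ⟨n, hn⟩ := exists_nat_one_div_lt hpos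
        exact ⟨n, hn.le⟩
      · rintro ⟨n, hn⟩
        have hpos : 0 < Metric.infDist x Uᶜ :=
          lt_of_lt_of_le (by positivity) hn
        have := (hU.isClosed_compl.notMem_iff_infDist_pos hne).2 hpos
        simpa using this

/-- If `f` is a right Baire one compositor then preimages under `f` of closed sets
are `Fσ`. -/
theorem stmt11 (f : ℝ → ℝ)
    (hf : ∀ g : ℝ → ℝ, BaireOneFn g → BaireOneFn (g ∘ f)) :
    ∀ A : Set ℝ, IsClosed A → IsFSigma (f ⁻¹' A) := by
  intro A hA
  set g : ℝ → ℝ := A.indicator 1 with hg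
  have hgB : BaireOneFn g := by
    intro U hU
    classical
    have hpre : g ⁻¹' U = (if (1:ℝ) ∈ U then A else ∅) ∪ (if (0:ℝ) ∈ U then Aᶜ else ∅) := by
      ext x
      by_cases hx : x ∈ A <;>
        simp [hg, indicator_apply, hx, Pi.one_apply] <;> split_ifs <;> simp_all
    rw [hpre]
    split_ifs with h1 h0 h0
    · refine ⟨fun _ => univ, fun _ => isClosed_univ, ?_⟩
      rw [iUnion_const]
      rw [union_compl_self]
    · simpa using ⟨fun _ => A, fun _ => hA, by simp [iUnion_const]⟩
    · simpa using isFSigma_of_isOpen Aᶜ hA.isOpen_compl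
    · exact ⟨fun _ => ∅, fun _ => isClosed_empty, by simp⟩
  have := hf g hgB {x | (1/2 : ℝ) < x} (isOpen_lt continuous_const continuous_id)
  have hset : (g ∘ f) ⁻¹' {x | (1/2 : ℝ) < x} = f ⁻¹' A := by
    ext x
    by_cases hx : f x ∈ A <;> simp [hg, indicator_apply, hx] <;> norm_num
  rwa [hset] at this
end

section
/- If f : ℝ → ℝ is a right Baire two compositor (i.e., g ∘ f is Baire two whenever g is Baire two), then for every Gδ set C ⊆ ℝ, the preimage f⁻¹(C) is a Gδσ set. -/
open Set

/-- `s` is a `Gδσ` set: a countable union of `Gδ` sets. -/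
def IsGDeltaSigma (s : Set ℝ) : Prop :=
  ∃ G : ℕ → Set ℝ, (∀ n, IsGδ (G n)) ∧ s = ⋃ n, G n

/-- `g` is of Baire class two: preimages of open sets are `Gδσ`. -/
def BaireTwoFn (g : ℝ → ℝ) : Prop :=
  ∀ A : Set ℝ, IsOpen A → IsGDeltaSigma (g ⁻¹' A)

lemma IsGδ.isGDeltaSigma {s : Set ℝ} (hs : IsGδ s) : IsGDeltaSigma s :=
  ⟨fun _ => s, fun _ => hs, (Set.iUnion_const s).symm⟩

lemma IsGδ.compl_isGDeltaSigma {s : Set ℝ} (hs : IsGδ s) : IsGDeltaSigma sᶜ := by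
  obtain ⟨U, hUo, rfl⟩ := hs.eq_iInter_nat
  refine ⟨fun n => (U n)ᶜ, fun n => (hUo n).isClosed_compl.isGδ, ?_⟩
  simp [compl_iInter]

lemma indicator_baireTwo {C : Set ℝ} (hC : IsGδ C) :
    BaireTwoFn (C.indicator (fun _ => 1)) := by
  intro A hA
  by_cases h1 : (1 : ℝ) ∈ A <;> by_cases h0 : (0 : ℝ) ∈ A
  · have : (C.indicator (fun _ => (1:ℝ))) ⁻¹' A = univ := by
      ext x; by_cases hx : x ∈ C <;> simp [indicator_apply, hx, h0, h1]
    rw [this]; exact IsGδ.univ.isGDeltaSigma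
  · have : (C.indicator (fun _ => (1:ℝ))) ⁻¹' A = C := by
      ext x; by_cases hx : x ∈ C <;> simp [indicator_apply, hx, h0, h1]
    rw [this]; exact hC.isGDeltaSigma
  · have : (C.indicator (fun _ => (1:ℝ))) ⁻¹' A = Cᶜ := by
      ext x; by_cases hx : x ∈ C <;> simp [indicator_apply, hx, h0, h1]
    rw [this]; exact hC.compl_isGDeltaSigma
  · have : (C.indicator (fun _ => (1:ℝ))) ⁻¹' A = ∅ := by
      ext x; by_cases hx : x ∈ C <;> simp [indicator_apply, hx, h0, h1]
    rw [this]; exact IsGδ.empty.isGDeltaSigma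

/-- If `f` is a right Baire two compositor, then preimages under `f` of `Gδ` sets
are `Gδσ`. -/
theorem stmt14 (f : ℝ → ℝ)
    (hf : ∀ g : ℝ → ℝ, BaireTwoFn g → BaireTwoFn (g ∘ f)) :
    ∀ C : Set ℝ, IsGδ C → IsGDeltaSigma (f ⁻¹' C) := by
  intro C hC
  have h := hf _ (indicator_baireTwo hC) (Ioi (1/2 : ℝ)) isOpen_Ioi
  have heq : (C.indicator (fun _ => (1:ℝ)) ∘ f) ⁻¹' (Ioi (1/2 : ℝ)) = f ⁻¹' C := by
    ext x
    by_cases hx : f x ∈ C <;> simp [indicator_apply, hx] <;> norm_num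
  rwa [heq] at h
end

section
/- The characteristic function f = χ_{ℝ∖ℚ} of the irrationals is not a right Baire one compositor (its preimage of the closed set {1} is ℝ∖ℚ, which is not Fσ), but it is a right Baire two compositor: the preimage under f of every Gδ set is a Gδσ set. -/
open Set
open scoped Classical

/-- Open subsets of `ℝ` are `Fσ`. -/
lemma isFSigma_of_isOpen_s15 {A : Set ℝ} (hA : IsOpen A) : IsFSigma A := by
  refine ⟨fun n => {x | (n : ENNReal)⁻¹ ≤ EMetric.infEdist x Aᶜ}, fun n => ?_, ?_⟩
  · exact isClosed_le continuous_const (EMetric.continuous_infEdist)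
  · ext x
    simp only [mem_iUnion, mem_setOf_eq]
    constructor
    · intro hx
      have hcl : x ∉ closure Aᶜ := by
        rw [hA.isClosed_compl.closure_eq]; simpa using hx
      have hpos : 0 < EMetric.infEdist x Aᶜ :=
        EMetric.infEdist_pos_iff_notMem_closure.2 hcl
      obtain ⟨n, hn⟩ := ENNReal.exists_inv_nat_lt hpos.ne'
      exact ⟨n, hn.le⟩
    · rintro ⟨n, hn⟩
      have hpos : 0 < EMetric.infEdist x Aᶜ :=
        lt_of_lt_of_le (ENNReal.inv_pos.2 (ENNReal.natCast_ne_top n)) hn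
      have := EMetric.infEdist_pos_iff_notMem_closure.1 hpos
      rw [hA.isClosed_compl.closure_eq] at this
      simpa using this

/-- The set of irrationals is not `Fσ`. -/
lemma not_isFSigma_irrational : ¬ IsFSigma {x : ℝ | Irrational x} := by
  rintro ⟨F, hFc, hFeq⟩
  have hQ : IsGδ {x : ℝ | Irrational x}ᶜ := by
    rw [hFeq, compl_iUnion]
    exact IsGδ.iInter fun n => (hFc n).isOpen_compl.isGδ
  have hQd : Dense {x : ℝ | Irrational x}ᶜ := by
    have : {x : ℝ | Irrational x}ᶜ = Set.range ((↑) : ℚ → ℝ) := by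
      ext x; simp [Irrational]
    rw [this]
    exact Rat.denseRange_cast
  have hd : Dense ({x : ℝ | Irrational x} ∩ {x : ℝ | Irrational x}ᶜ) :=
    Dense.inter_of_Gδ IsGδ.setOf_irrational hQ dense_irrational hQd
  rw [inter_compl_self] at hd
  simpa using hd.nonempty

/-- The characteristic function of the irrationals is not a right Baire one compositor
(its preimage of `{1}` is the irrationals, not an `Fσ` set), but it is a right Baire
two compositor: preimages of `Gδ` sets are `Gδσ`. -/
theorem stmt15 (f : ℝ → ℝ)
    (hf : ∀ x : ℝ, f x = if Irrational x then 1 else 0) :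
    (f ⁻¹' {1} = {x : ℝ | Irrational x}) ∧
    ¬ IsFSigma (f ⁻¹' {1}) ∧
    ¬ (∀ g : ℝ → ℝ, BaireOneFn g → BaireOneFn (g ∘ f)) ∧
    (∀ C : Set ℝ, IsGδ C → IsGDeltaSigma (f ⁻¹' C)) := by
  have hpre : f ⁻¹' {1} = {x : ℝ | Irrational x} := by
    ext x
    simp only [mem_preimage, mem_singleton_iff, mem_setOf_eq, hf x]
    split <;> simp_all
  have hnotF : ¬ IsFSigma (f ⁻¹' {1}) := by
    rw [hpre]; exact not_isFSigma_irrational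
  refine ⟨hpre, hnotF, ?_, ?_⟩
  · intro h
    have hid : BaireOneFn id := fun A hA => by
      simpa using isFSigma_of_isOpen_s15 hA
    have := h id hid (Set.Ioi (1/2)) isOpen_Ioi
    have heq : (id ∘ f) ⁻¹' Set.Ioi (1/2) = {x : ℝ | Irrational x} := by
      ext x
      simp only [Function.comp, id, mem_preimage, mem_Ioi, mem_setOf_eq, hf x]
      by_cases hx : Irrational x <;> norm_num [hx]
    rw [heq] at this
    exact not_isFSigma_irrational this
  · intro C hC
    by_cases h1 : (1 : ℝ) ∈ C <;> by_cases h0 : (0 : ℝ) ∈ C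
    · refine ⟨fun _ => Set.univ, fun _ => IsGδ.univ, ?_⟩
      ext x
      simp only [mem_preimage, hf x, iUnion_const, mem_univ, iff_true]
      split <;> assumption
    · refine ⟨fun _ => {x : ℝ | Irrational x}, fun _ => IsGδ.setOf_irrational, ?_⟩
      ext x
      simp only [mem_preimage, hf x, iUnion_const, mem_setOf_eq]
      split <;> simp_all
    · refine ⟨fun n => {(((Denumerable.eqv ℚ).symm n : ℚ) : ℝ)}, fun _ => IsGδ.singleton _, ?_⟩
      ext x
      simp only [mem_preimage, hf x, mem_iUnion, mem_singleton_iff]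
      constructor
      · intro hx
        have hx' : ¬ Irrational x := by
          by_contra hirr
          simp [hirr] at hx
          exact h1 hx
        rw [Irrational, not_not] at hx'
        obtain ⟨q, hq⟩ := hx'
        exact ⟨Denumerable.eqv ℚ q, by rw [Equiv.symm_apply_apply]; exact hq.symm⟩
      · rintro ⟨n, rfl⟩
        have : ¬ Irrational (((Denumerable.eqv ℚ).symm n : ℚ) : ℝ) := Rat.not_irrational _
        simpa [this] using h0
    · refine ⟨fun _ => ∅, fun _ => isOpen_empty.isGδ, ?_⟩
      ext x
      simp only [mem_preimage, hf x, iUnion_const, mem_empty_iff_false, iff_false]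
      split <;> assumption
end
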